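/- arXiv:2602.04867 — 4 statements merged into one kernel-verified Lean document; each statement's English description precedes it below -/
import Mathlib

section
/- For every subset S of {1,...,60} with |S| = 6, there exists a block B ∈ 𝓑 such that |S ∩ B| ≥ 3. -/
open Finset

/-- The pair `P_i = {2i-1, 2i} ⊆ {1,…,30}` for `1 ≤ i ≤ 15`. -/
def pairP (i : ℕ) : Finset ℕ := {2 * i - 1, 2 * i}

/-- The pair `Q_i = {30+2i-1, 30+2i} ⊆ {31,…,60}` for `1 ≤ i ≤ 15`. -/
def pairQ (i : ℕ) : Finset ℕ := {30 + 2 * i - 1, 30 + 2 * i}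

/-- `𝓑₁ = {P_i ∪ P_j ∪ P_k : 1 ≤ i < j < k ≤ 15}`. -/
def B1 : Finset (Finset ℕ) :=
  ((Finset.Icc 1 15).powersetCard 3).image (fun T => T.biUnion pairP)

/-- `𝓑₂ = {Q_i ∪ Q_j ∪ Q_k : 1 ≤ i < j < k ≤ 15}`. -/
def B2 : Finset (Finset ℕ) :=
  ((Finset.Icc 1 15).powersetCard 3).image (fun T => T.biUnion pairQ)

/-- `𝓑 = 𝓑₁ ∪ 𝓑₂`. -/
def Bfam : Finset (Finset ℕ) := B1 ∪ B2

lemma half_step (S' : Finset ℕ) (pair : ℕ → Finset ℕ) (f : ℕ → ℕ)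
    (hf1 : ∀ x ∈ S', f x ∈ Finset.Icc 1 15)
    (hf2 : ∀ x ∈ S', x ∈ pair (f x))
    (hcard : S'.card = 3) :
    ∃ T ∈ (Finset.Icc 1 15).powersetCard 3, S' ⊆ T.biUnion pair := by
  have hsub : S'.image f ⊆ Finset.Icc 1 15 := by
    intro y hy
    obtain ⟨x, hx, rfl⟩ := Finset.mem_image.1 hy
    exact hf1 x hx
  have h1 : (S'.image f).card ≤ 3 := by
    calc (S'.image f).card ≤ S'.card := Finset.card_image_le
    _ = 3 := hcard
  have h2 : 3 ≤ (Finset.Icc 1 15).card := by simp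
  obtain ⟨T, hT1, hT2, hT3⟩ := Finset.exists_subsuperset_card_eq hsub h1 h2
  refine ⟨T, Finset.mem_powersetCard.2 ⟨hT2, hT3⟩, ?_⟩
  intro x hx
  exact Finset.mem_biUnion.2 ⟨f x, hT1 (Finset.mem_image_of_mem f hx), hf2 x hx⟩

/-- Every 6-element subset `S` of `{1,…,60}` meets some block `B ∈ 𝓑`
in at least three elements. -/
theorem stmt_0 :
    ∀ S : Finset ℕ, S ⊆ Finset.Icc 1 60 → S.card = 6 →
      ∃ B ∈ Bfam, 3 ≤ (S ∩ B).card := by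
  intro S hS hcard
  set S1 := S ∩ Finset.Icc 1 30 with hS1
  set S2 := S ∩ Finset.Icc 31 60 with hS2
  have hsplit : 3 ≤ S1.card ∨ 3 ≤ S2.card := by
    by_contra h
    push_neg at h
    have hunion : S ⊆ S1 ∪ S2 := by
      intro x hx
      have := hS hx
      simp only [Finset.mem_Icc] at this
      simp only [hS1, hS2, Finset.mem_union, Finset.mem_inter, Finset.mem_Icc]
      exact Or.imp (fun h' => ⟨hx, h'⟩) (fun h' => ⟨hx, h'⟩)
        (by omega : (1 ≤ x ∧ x ≤ 30) ∨ (31 ≤ x ∧ x ≤ 60))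
    have := Finset.card_le_card hunion
    have := Finset.card_union_le S1 S2
    omega
  rcases hsplit with h | h
  · obtain ⟨S', hS'sub, hS'card⟩ := Finset.exists_subset_card_eq h
    obtain ⟨T, hT, hST⟩ := half_step S' pairP (fun x => (x + 1) / 2)
      (by intro x hx
          have := (Finset.mem_inter.1 (hS'sub hx)).2
          simp only [Finset.mem_Icc] at this ⊢
          omega)
      (by intro x hx
          have := (Finset.mem_inter.1 (hS'sub hx)).2
          simp only [Finset.mem_Icc] at this
          simp only [pairP, Finset.mem_insert, Finset.mem_singleton]
          omega)
      hS'card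
    refine ⟨T.biUnion pairP, ?_, ?_⟩
    · exact Finset.mem_union_left _ (Finset.mem_image.2 ⟨T, hT, rfl⟩)
    · calc 3 = S'.card := hS'card.symm
      _ ≤ (S ∩ T.biUnion pairP).card := Finset.card_le_card (fun x hx =>
          Finset.mem_inter.2 ⟨(Finset.mem_inter.1 (hS'sub hx)).1, hST hx⟩)
  · obtain ⟨S', hS'sub, hS'card⟩ := Finset.exists_subset_card_eq h
    obtain ⟨T, hT, hST⟩ := half_step S' pairQ (fun x => (x - 29) / 2)
      (by intro x hx
          have := (Finset.mem_inter.1 (hS'sub hx)).2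
          simp only [Finset.mem_Icc] at this ⊢
          omega)
      (by intro x hx
          have := (Finset.mem_inter.1 (hS'sub hx)).2
          simp only [Finset.mem_Icc] at this
          simp only [pairQ, Finset.mem_insert, Finset.mem_singleton]
          omega)
      hS'card
    refine ⟨T.biUnion pairQ, ?_, ?_⟩
    · exact Finset.mem_union_right _ (Finset.mem_image.2 ⟨T, hT, rfl⟩)
    · calc 3 = S'.card := hS'card.symm
      _ ≤ (S ∩ T.biUnion pairQ).card := Finset.card_le_card (fun x hx =>
          Finset.mem_inter.2 ⟨(Finset.mem_inter.1 (hS'sub hx)).1, hST hx⟩)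
end

section
/- Let m be an even integer with m ≥ 6 and set n = 2m. Split [n] = {1,...,n} into the halves U₁ = {1,...,m} and U₂ = {m+1,...,n}, partition each half into m/2 disjoint consecutive pairs, and let 𝓑 be the family of all unions of three pairwise distinct pairs lying inside the same half. Then |𝓑| = 2·C(m/2, 3), and for every 6-element subset S ⊆ [n] there exists B ∈ 𝓑 with |S ∩ B| ≥ 3. -/
open Finset

/-- Pair `{2i-1, 2i}` of the first half `U₁ = {1,…,m}`. -/
def pairH1 (i : ℕ) : Finset ℕ := {2 * i - 1, 2 * i}

/-- Pair `{m+2i-1, m+2i}` of the second half `U₂ = {m+1,…,2m}`. -/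
def pairH2 (m i : ℕ) : Finset ℕ := {m + 2 * i - 1, m + 2 * i}

/-- The family of all unions of three pairwise distinct pairs lying in the
same half of `[2m]`. -/
def BfamGen (m : ℕ) : Finset (Finset ℕ) :=
  ((Finset.Icc 1 (m / 2)).powersetCard 3).image (fun T => T.biUnion pairH1) ∪
  ((Finset.Icc 1 (m / 2)).powersetCard 3).image (fun T => T.biUnion (pairH2 m))

lemma mem_pairH1 {i x : ℕ} : x ∈ pairH1 i ↔ x = 2 * i - 1 ∨ x = 2 * i := by
  simp [pairH1]

lemma mem_pairH2 {m i x : ℕ} : x ∈ pairH2 m i ↔ x = m + 2 * i - 1 ∨ x = m + 2 * i := by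
  simp [pairH2]

lemma key1 {m : ℕ} {T : Finset ℕ} (hT : T ⊆ Finset.Icc 1 (m / 2)) (i : ℕ) (hi : 1 ≤ i) :
    i ∈ T ↔ 2 * i ∈ T.biUnion pairH1 := by
  simp only [Finset.mem_biUnion, mem_pairH1]
  constructor
  · intro h; exact ⟨i, h, Or.inr rfl⟩
  · rintro ⟨j, hj, hx⟩
    have hj1 : 1 ≤ j := (Finset.mem_Icc.mp (hT hj)).1
    have : j = i := by omega
    subst this; exact hj

lemma key2 {m : ℕ} {T : Finset ℕ} (hT : T ⊆ Finset.Icc 1 (m / 2)) (i : ℕ) (hi : 1 ≤ i) :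
    i ∈ T ↔ m + 2 * i ∈ T.biUnion (pairH2 m) := by
  simp only [Finset.mem_biUnion, mem_pairH2]
  constructor
  · intro h; exact ⟨i, h, Or.inr rfl⟩
  · rintro ⟨j, hj, hx⟩
    have hj1 : 1 ≤ j := (Finset.mem_Icc.mp (hT hj)).1
    have : j = i := by omega
    subst this; exact hj

/-- For even `m ≥ 6` and `n = 2m`, the family `𝓑` of recombined blocks has
`|𝓑| = 2·C(m/2, 3)`, and every 6-element subset `S ⊆ [n]` meets some block
`B ∈ 𝓑` in at least three elements. -/
theorem stmt_4 (m : ℕ) (hm : Even m) (hm6 : 6 ≤ m) :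
    (BfamGen m).card = 2 * Nat.choose (m / 2) 3 ∧
    ∀ S : Finset ℕ, S ⊆ Finset.Icc 1 (2 * m) → S.card = 6 →
      ∃ B ∈ BfamGen m, 3 ≤ (S ∩ B).card := by
  obtain ⟨k, hk⟩ := hm
  have hm2 : m / 2 * 2 = m := by omega
  -- elements of first-half blocks are ≤ m, second-half ≥ m+1
  have hbd1 : ∀ {T : Finset ℕ}, T ⊆ Finset.Icc 1 (m / 2) →
      ∀ x ∈ T.biUnion pairH1, 1 ≤ x ∧ x ≤ m := by
    intro T hT x hx
    obtain ⟨j, hj, hx⟩ := Finset.mem_biUnion.mp hx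
    have := Finset.mem_Icc.mp (hT hj)
    rw [mem_pairH1] at hx
    omega
  have hbd2 : ∀ {T : Finset ℕ}, T ⊆ Finset.Icc 1 (m / 2) →
      ∀ x ∈ T.biUnion (pairH2 m), m + 1 ≤ x ∧ x ≤ 2 * m := by
    intro T hT x hx
    obtain ⟨j, hj, hx⟩ := Finset.mem_biUnion.mp hx
    have := Finset.mem_Icc.mp (hT hj)
    rw [mem_pairH2] at hx
    omega
  constructor
  · -- cardinality
    have hinj1 : Set.InjOn (fun T : Finset ℕ => T.biUnion pairH1)
        ↑((Finset.Icc 1 (m / 2)).powersetCard 3) := by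
      intro T1 h1 T2 h2 h
      simp only [Finset.mem_coe, Finset.mem_powersetCard] at h1 h2
      have h' : T1.biUnion pairH1 = T2.biUnion pairH1 := h
      ext i
      by_cases hi : 1 ≤ i
      · rw [key1 h1.1 i hi, key1 h2.1 i hi, h']
      · have : i = 0 := by omega
        subst this
        constructor <;> intro hmem
        · exact absurd (Finset.mem_Icc.mp (h1.1 hmem)).1 (by omega)
        · exact absurd (Finset.mem_Icc.mp (h2.1 hmem)).1 (by omega)
    have hinj2 : Set.InjOn (fun T : Finset ℕ => T.biUnion (pairH2 m))
        ↑((Finset.Icc 1 (m / 2)).powersetCard 3) := by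
      intro T1 h1 T2 h2 h
      simp only [Finset.mem_coe, Finset.mem_powersetCard] at h1 h2
      have h' : T1.biUnion (pairH2 m) = T2.biUnion (pairH2 m) := h
      ext i
      by_cases hi : 1 ≤ i
      · rw [key2 h1.1 i hi, key2 h2.1 i hi, h']
      · have : i = 0 := by omega
        subst this
        constructor <;> intro hmem
        · exact absurd (Finset.mem_Icc.mp (h1.1 hmem)).1 (by omega)
        · exact absurd (Finset.mem_Icc.mp (h2.1 hmem)).1 (by omega)
    have hdisj : Disjoint
        (((Finset.Icc 1 (m / 2)).powersetCard 3).image (fun T => T.biUnion pairH1))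
        (((Finset.Icc 1 (m / 2)).powersetCard 3).image (fun T => T.biUnion (pairH2 m))) := by
      rw [Finset.disjoint_left]
      intro B hB1 hB2
      obtain ⟨T1, hT1, rfl⟩ := Finset.mem_image.mp hB1
      obtain ⟨T2, hT2, hEq⟩ := Finset.mem_image.mp hB2
      rw [Finset.mem_powersetCard] at hT1 hT2
      -- T2 is nonempty since card 3
      obtain ⟨j, hj⟩ := Finset.card_pos.mp (by rw [hT2.2]; norm_num : 0 < T2.card)
      have hx : m + 2 * j ∈ T2.biUnion (pairH2 m) :=
        Finset.mem_biUnion.mpr ⟨j, hj, mem_pairH2.mpr (Or.inr rfl)⟩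
      rw [hEq] at hx
      have := hbd1 hT1.1 _ hx
      have := Finset.mem_Icc.mp (hT2.1 hj)
      omega
    have e : (Finset.Icc 1 (m / 2)).card = m / 2 := by rw [Nat.card_Icc]; omega
    rw [BfamGen, Finset.card_union_of_disjoint hdisj,
        Finset.card_image_of_injOn hinj1, Finset.card_image_of_injOn hinj2,
        Finset.card_powersetCard, e]
    ring
  · -- covering
    intro S hS hcard
    set S1 := S.filter (· ≤ m) with hS1
    have hsplit : (S.filter (· ≤ m)).card + (S.filter (fun x => ¬ x ≤ m)).card = 6 := by
      rw [Finset.card_filter_add_card_filter_not]; exact hcard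
    have hIcc : (Finset.Icc 1 (m / 2)).card = m / 2 := by rw [Nat.card_Icc]; omega
    by_cases hbig : 3 ≤ (S.filter (· ≤ m)).card
    · -- use half 1
      obtain ⟨A, hAsub, hA3⟩ := Finset.exists_subset_card_eq hbig
      set T := A.image (fun x => (x + 1) / 2) with hT
      have hTsub : T ⊆ Finset.Icc 1 (m / 2) := by
        intro i hi
        obtain ⟨a, ha, rfl⟩ := Finset.mem_image.mp hi
        have ha' := hAsub ha
        have h1 := Finset.mem_filter.mp ha'
        have h2 := Finset.mem_Icc.mp (hS h1.1)
        have : a ≤ m := h1.2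
        rw [Finset.mem_Icc]; omega
      have hTcard : T.card ≤ 3 := hA3 ▸ Finset.card_image_le
      obtain ⟨T', hTT', hT'sub, hT'3⟩ :=
        Finset.exists_subsuperset_card_eq hTsub hTcard (by omega)
      refine ⟨T'.biUnion pairH1, ?_, ?_⟩
      · exact Finset.mem_union_left _ (Finset.mem_image.mpr
          ⟨T', Finset.mem_powersetCard.mpr ⟨hT'sub, hT'3⟩, rfl⟩)
      · have hAin : A ⊆ S ∩ T'.biUnion pairH1 := by
          intro a ha
          have h1 := Finset.mem_filter.mp (hAsub ha)
          have h2 := Finset.mem_Icc.mp (hS h1.1)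
          refine Finset.mem_inter.mpr ⟨h1.1, Finset.mem_biUnion.mpr
            ⟨(a + 1) / 2, hTT' (Finset.mem_image.mpr ⟨a, ha, rfl⟩), ?_⟩⟩
          rw [mem_pairH1]; omega
        calc 3 = A.card := hA3.symm
          _ ≤ _ := Finset.card_le_card hAin
    · -- use half 2
      have hbig2 : 3 ≤ (S.filter (fun x => ¬ x ≤ m)).card := by omega
      obtain ⟨A, hAsub, hA3⟩ := Finset.exists_subset_card_eq hbig2
      set T := A.image (fun x => (x - m + 1) / 2) with hT
      have hTsub : T ⊆ Finset.Icc 1 (m / 2) := by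
        intro i hi
        obtain ⟨a, ha, rfl⟩ := Finset.mem_image.mp hi
        have h1 := Finset.mem_filter.mp (hAsub ha)
        have h2 := Finset.mem_Icc.mp (hS h1.1)
        have : ¬ a ≤ m := h1.2
        rw [Finset.mem_Icc]; omega
      have hTcard : T.card ≤ 3 := hA3 ▸ Finset.card_image_le
      obtain ⟨T', hTT', hT'sub, hT'3⟩ :=
        Finset.exists_subsuperset_card_eq hTsub hTcard (by omega)
      refine ⟨T'.biUnion (pairH2 m), ?_, ?_⟩
      · exact Finset.mem_union_right _ (Finset.mem_image.mpr
          ⟨T', Finset.mem_powersetCard.mpr ⟨hT'sub, hT'3⟩, rfl⟩)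
      · have hAin : A ⊆ S ∩ T'.biUnion (pairH2 m) := by
          intro a ha
          have h1 := Finset.mem_filter.mp (hAsub ha)
          have h2 := Finset.mem_Icc.mp (hS h1.1)
          have h3 : ¬ a ≤ m := h1.2
          refine Finset.mem_inter.mpr ⟨h1.1, Finset.mem_biUnion.mpr
            ⟨(a - m + 1) / 2, hTT' (Finset.mem_image.mpr ⟨a, ha, rfl⟩), ?_⟩⟩
          rw [mem_pairH2]; omega
        calc 3 = A.card := hA3.symm
          _ ≤ _ := Finset.card_le_card hAin
end

section
/- Let 𝓕 be any family of 6-element subsets of [60] = {1,...,60} such that for every 6-element subset S ⊆ [60] there exists B ∈ 𝓕 with |S ∩ B| ≥ 3. Then |𝓕| ≥ 97. -/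
/-!
Double counting: a block `B` meets at most `∑_{i=3}^{6} C(6,i) C(54,6-i) = 517870` of the
`C(60,6) = 50063860` six-subsets of `[60]` in three or more points, and every six-subset has to be
met this way by some block, so there are at least `⌈50063860 / 517870⌉ = 97` blocks.
-/

open Finset

theorem card_powersetCard_filter_le_card_inter_le {α : Type*} [DecidableEq α] {U B : Finset α}
    (hBU : B ⊆ U) (k t : ℕ) :
    #{S ∈ powersetCard k U | t ≤ #(S ∩ B)} ≤
      ∑ i ∈ Icc t k, (#B).choose i * (#U - #B).choose (k - i) := by
  calc #{S ∈ powersetCard k U | t ≤ #(S ∩ B)}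
      ≤ #((Icc t k).biUnion fun i => powersetCard i B ×ˢ powersetCard (k - i) (U \ B)) := by
        refine card_le_card_of_injOn (fun S => (S ∩ B, S \ B)) ?_ ?_
        · intro S hS
          simp only [coe_filter, mem_powersetCard, Set.mem_ofPred_eq] at hS
          obtain ⟨⟨hSU, hScard⟩, ht⟩ := hS
          have hsplit : #(S \ B) + #(S ∩ B) = k := by rw [card_sdiff_add_card_inter, hScard]
          simp only [coe_biUnion, coe_Icc, Set.mem_iUnion, mem_coe, mem_product,
            mem_powersetCard, Set.mem_Icc]
          exact ⟨#(S ∩ B), ⟨ht, by omega⟩, ⟨inter_subset_right, rfl⟩,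
            sdiff_subset_sdiff hSU le_rfl, by omega⟩
        · intro S₁ _ S₂ _ h
          rw [← sup_inf_sdiff S₁ B, ← sup_inf_sdiff S₂ B]
          obtain ⟨hinter, hsdiff⟩ := Prod.mk.inj h
          exact congrArg₂ (· ⊔ ·) hinter hsdiff
    _ ≤ ∑ i ∈ Icc t k, #(powersetCard i B ×ˢ powersetCard (k - i) (U \ B)) :=
        card_biUnion_le
    _ = ∑ i ∈ Icc t k, (#B).choose i * (#U - #B).choose (k - i) := by
        simp only [card_product, card_powersetCard, card_sdiff_of_subset hBU]

/-- Any family `𝓕` of 6-element subsets of `{1,…,60}` such that every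
6-element subset of `{1,…,60}` meets some block of `𝓕` in at least three
elements has at least 97 blocks. -/
theorem stmt_5 (𝓕 : Finset (Finset ℕ))
    (hblocks : ∀ B ∈ 𝓕, B ⊆ Finset.Icc 1 60 ∧ B.card = 6)
    (hcover : ∀ S : Finset ℕ, S ⊆ Finset.Icc 1 60 → S.card = 6 →
      ∃ B ∈ 𝓕, 3 ≤ (S ∩ B).card) :
    97 ≤ 𝓕.card := by
  have hsixsets : #(powersetCard 6 (Icc 1 60)) = 50063860 := by
    simp only [card_powersetCard, Nat.card_Icc]; rfl
  have hmet : ∀ B ∈ 𝓕, #{S ∈ powersetCard 6 (Icc 1 60) | 3 ≤ #(S ∩ B)} ≤ 517870 := by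
    intro B hB
    obtain ⟨hBU, hBcard⟩ := hblocks B hB
    refine (card_powersetCard_filter_le_card_inter_le hBU 6 3).trans_eq ?_
    rw [hBcard, Nat.card_Icc]
    decide
  have hcovered : ∀ S ∈ powersetCard 6 (Icc 1 60),
      1 ≤ #(𝓕.bipartiteAbove (fun S B => 3 ≤ #(S ∩ B)) S) := by
    intro S hS
    obtain ⟨B, hB, hmeets⟩ := hcover S (mem_powersetCard.1 hS).1 (mem_powersetCard.1 hS).2
    exact one_le_card.2 ⟨B, mem_filter.2 ⟨hB, hmeets⟩⟩
  have hdouble := card_mul_le_card_mul _ hcovered hmet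
  omega
end

section
/- Let M be the minimum cardinality of a family 𝓕 of 6-element subsets of [60] = {1,...,60} such that for every 6-element subset S ⊆ [60] there exists B ∈ 𝓕 with |S ∩ B| ≥ 3. Then 97 ≤ M ≤ 910; in particular, such a family of size 910 exists, and no such family has fewer than 97 blocks. -/
open Finset

/-- The triple-intersection property: `𝓕` is a family of 6-element subsets of
`{1,…,60}` such that every 6-element subset `S ⊆ {1,…,60}` satisfies
`|S ∩ B| ≥ 3` for some `B ∈ 𝓕`. -/
def TripleIntersecting (𝓕 : Finset (Finset ℕ)) : Prop :=
  (∀ B ∈ 𝓕, B ⊆ Finset.Icc 1 60 ∧ B.card = 6) ∧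
  ∀ S : Finset ℕ, S ⊆ Finset.Icc 1 60 → S.card = 6 →
    ∃ B ∈ 𝓕, 3 ≤ (S ∩ B).card

/-! ### Lower bound: every triple-intersecting family has ≥ 97 blocks -/

/-- Each block covers at most `∑ⱼ C(6,j)·C(54,6-j) = 517870` six-sets. -/
lemma cover_card (B : Finset ℕ) (hB : B ⊆ Finset.Icc 1 60) (hBc : B.card = 6) :
    ((((Finset.Icc 1 60).powersetCard 6)).filter (fun S => 3 ≤ (S ∩ B).card)).card
      ≤ 517870 := by
  set D := Finset.Icc 1 60 \ B with hD
  have hDcard : D.card = 54 := by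
    rw [hD, card_sdiff_of_subset hB, hBc]
    simp
  have hsub : (((Finset.Icc 1 60).powersetCard 6)).filter (fun S => 3 ≤ (S ∩ B).card) ⊆
      (B.powerset.filter (fun A => 3 ≤ A.card)).biUnion
        (fun A => (D.powersetCard (6 - A.card)).image (fun C => A ∪ C)) := by
    intro S hS
    simp only [mem_filter, mem_powersetCard] at hS
    obtain ⟨⟨hS1, hS2⟩, hS3⟩ := hS
    refine mem_biUnion.2 ⟨S ∩ B, ?_, ?_⟩
    · exact mem_filter.2 ⟨mem_powerset.2 inter_subset_right, hS3⟩
    · refine mem_image.2 ⟨S \ B, ?_, ?_⟩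
      · rw [mem_powersetCard]
        constructor
        · intro x hx
          rw [hD, mem_sdiff]
          exact ⟨hS1 (mem_sdiff.1 hx).1, (mem_sdiff.1 hx).2⟩
        · have h := Finset.card_inter_add_card_sdiff S B
          omega
      · ext x
        simp only [mem_union, mem_inter, mem_sdiff]
        tauto
  have h1 : ((((Finset.Icc 1 60).powersetCard 6)).filter (fun S => 3 ≤ (S ∩ B).card)).card ≤
      ∑ A ∈ B.powerset.filter (fun A => 3 ≤ A.card),
        ((D.powersetCard (6 - A.card)).image (fun C => A ∪ C)).card :=
    (card_le_card hsub).trans card_biUnion_le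
  have h2 : ∀ A ∈ B.powerset.filter (fun A => 3 ≤ A.card),
      ((D.powersetCard (6 - A.card)).image (fun C => A ∪ C)).card ≤
        Nat.choose 54 (6 - A.card) := by
    intro A _
    calc ((D.powersetCard (6 - A.card)).image (fun C => A ∪ C)).card
        ≤ (D.powersetCard (6 - A.card)).card := card_image_le
      _ = Nat.choose 54 (6 - A.card) := by rw [card_powersetCard, hDcard]
  have hset : B.powerset.filter (fun A => 3 ≤ A.card) =
      B.powersetCard 3 ∪ B.powersetCard 4 ∪ B.powersetCard 5 ∪ B.powersetCard 6 := by
    ext A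
    simp only [mem_filter, mem_powerset, mem_union, mem_powersetCard]
    constructor
    · rintro ⟨h, hc⟩
      have hle := card_le_card h
      rw [hBc] at hle
      have : A.card = 3 ∨ A.card = 4 ∨ A.card = 5 ∨ A.card = 6 := by omega
      tauto
    · rintro ((((⟨h, hc⟩ | ⟨h, hc⟩) | ⟨h, hc⟩) | ⟨h, hc⟩)) <;> exact ⟨h, by omega⟩
  have hdisj : ∀ i j : ℕ, i ≠ j → Disjoint (B.powersetCard i) (B.powersetCard j) := by
    intro i j hij
    rw [disjoint_left]
    intro A h1 h2
    rw [mem_powersetCard] at h1 h2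
    omega
  have hsumj : ∀ j : ℕ, ∑ A ∈ B.powersetCard j, Nat.choose 54 (6 - A.card) =
      Nat.choose 6 j * Nat.choose 54 (6 - j) := by
    intro j
    rw [Finset.sum_congr rfl (fun A hA => by rw [(mem_powersetCard.1 hA).2]),
      Finset.sum_const, card_powersetCard, hBc, smul_eq_mul]
  have h3 : ∑ A ∈ B.powerset.filter (fun A => 3 ≤ A.card),
      Nat.choose 54 (6 - A.card) = 517870 := by
    rw [hset, Finset.sum_union, Finset.sum_union, Finset.sum_union, hsumj, hsumj, hsumj, hsumj]
    · decide
    · exact hdisj 3 4 (by norm_num)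
    · rw [disjoint_union_left]
      exact ⟨hdisj 3 5 (by norm_num), hdisj 4 5 (by norm_num)⟩
    · rw [disjoint_union_left, disjoint_union_left]
      exact ⟨⟨hdisj 3 6 (by norm_num), hdisj 4 6 (by norm_num)⟩, hdisj 5 6 (by norm_num)⟩
  calc ((((Finset.Icc 1 60).powersetCard 6)).filter (fun S => 3 ≤ (S ∩ B).card)).card
      ≤ ∑ A ∈ B.powerset.filter (fun A => 3 ≤ A.card),
        ((D.powersetCard (6 - A.card)).image (fun C => A ∪ C)).card := h1
    _ ≤ ∑ A ∈ B.powerset.filter (fun A => 3 ≤ A.card),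
        Nat.choose 54 (6 - A.card) := Finset.sum_le_sum h2
    _ = 517870 := h3

lemma lower_bound (𝓕 : Finset (Finset ℕ)) (h : TripleIntersecting 𝓕) : 97 ≤ 𝓕.card := by
  obtain ⟨h1, h2⟩ := h
  have hcov : (Finset.Icc 1 60).powersetCard 6 ⊆
      𝓕.biUnion (fun B => (((Finset.Icc 1 60).powersetCard 6)).filter
        (fun S => 3 ≤ (S ∩ B).card)) := by
    intro S hS
    rw [mem_powersetCard] at hS
    obtain ⟨B, hB, hSB⟩ := h2 S hS.1 hS.2
    exact mem_biUnion.2 ⟨B, hB, mem_filter.2 ⟨mem_powersetCard.2 hS, hSB⟩⟩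
  have hbig : ((Finset.Icc 1 60).powersetCard 6).card = 50063860 := by
    rw [card_powersetCard]
    simp only [Nat.card_Icc]
    decide
  have hle : 50063860 ≤ ∑ B ∈ 𝓕, (((((Finset.Icc 1 60).powersetCard 6)).filter
      (fun S => 3 ≤ (S ∩ B).card)).card) := by
    rw [← hbig]
    exact (card_le_card hcov).trans card_biUnion_le
  have hsum : ∑ B ∈ 𝓕, (((((Finset.Icc 1 60).powersetCard 6)).filter
      (fun S => 3 ≤ (S ∩ B).card)).card) ≤ 𝓕.card * 517870 := by
    calc ∑ B ∈ 𝓕, (((((Finset.Icc 1 60).powersetCard 6)).filter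
          (fun S => 3 ≤ (S ∩ B).card)).card)
        ≤ ∑ _B ∈ 𝓕, 517870 :=
          Finset.sum_le_sum (fun B hB => cover_card B (h1 B hB).1 (h1 B hB).2)
      _ = 𝓕.card * 517870 := by rw [Finset.sum_const, smul_eq_mul]
  nlinarith [hle, hsum]

/-! ### Upper bound: an explicit family of 910 blocks -/

/-- The pair `{2k-1, 2k}`. -/
def pairF (k : ℕ) : Finset ℕ := {2 * k - 1, 2 * k}

/-- Blow up a set of pair indices to the union of the pairs. -/
def blow (K : Finset ℕ) : Finset ℕ := K.biUnion pairF

def goodFam : Finset (Finset ℕ) :=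
  (((Finset.Icc 1 15).powersetCard 3) ∪ ((Finset.Icc 16 30).powersetCard 3)).image blow

lemma mem_blow {K : Finset ℕ} {x : ℕ} :
    x ∈ blow K ↔ ∃ k ∈ K, x = 2 * k - 1 ∨ x = 2 * k := by
  simp [blow, pairF, mem_biUnion]

lemma blow_image (K : Finset ℕ) (hK : ∀ k ∈ K, 1 ≤ k) :
    (blow K).image (fun x => (x + 1) / 2) = K := by
  ext j
  simp only [mem_image]
  constructor
  · rintro ⟨x, hx, rfl⟩
    obtain ⟨k, hk, h⟩ := mem_blow.1 hx
    have := hK k hk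
    have : (x + 1) / 2 = k := by omega
    rwa [this]
  · intro hj
    refine ⟨2 * j, mem_blow.2 ⟨j, hj, Or.inr rfl⟩, by omega⟩

lemma card_blow (K : Finset ℕ) (hK : ∀ k ∈ K, 1 ≤ k) : (blow K).card = 2 * K.card := by
  have hpair : ∀ k ∈ K, (pairF k).card = 2 := by
    intro k hk
    have h1 := hK k hk
    simp only [pairF]
    rw [card_insert_of_notMem (by simp; omega), card_singleton]
  rw [blow, card_biUnion]
  · rw [Finset.sum_congr rfl hpair, Finset.sum_const, smul_eq_mul, mul_comm]
  · intro k hk k' hk' hne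
    have h1 := hK k hk
    have h2 := hK k' hk'
    simp only [pairF, disjoint_left, mem_insert, mem_singleton]
    rintro x (rfl | rfl) (h | h) <;> omega

lemma goodFam_card : goodFam.card = 910 := by
  have hdisj : Disjoint ((Finset.Icc 1 15).powersetCard 3)
      ((Finset.Icc (16:ℕ) 30).powersetCard 3) := by
    rw [disjoint_left]
    intro K h1 h2
    rw [mem_powersetCard] at h1 h2
    obtain ⟨k, hk⟩ := Finset.card_pos.1 (by omega : 0 < K.card)
    have := h1.1 hk
    have := h2.1 hk
    simp only [Finset.mem_Icc] at *
    omega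
  have hinj : Set.InjOn blow ↑(((Finset.Icc 1 15).powersetCard 3) ∪
      ((Finset.Icc (16:ℕ) 30).powersetCard 3)) := by
    intro K hK K' hK' h
    simp only [coe_union, Set.mem_union, mem_coe, mem_powersetCard] at hK hK'
    have hb : ∀ k ∈ K, 1 ≤ k := by
      rcases hK with ⟨h1, _⟩ | ⟨h1, _⟩ <;> intro k hk <;>
        have := h1 hk <;> simp only [Finset.mem_Icc] at this <;> omega
    have hb' : ∀ k ∈ K', 1 ≤ k := by
      rcases hK' with ⟨h1, _⟩ | ⟨h1, _⟩ <;> intro k hk <;>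
        have := h1 hk <;> simp only [Finset.mem_Icc] at this <;> omega
    rw [← blow_image K hb, ← blow_image K' hb', h]
  rw [goodFam, Finset.card_image_of_injOn hinj, Finset.card_union_of_disjoint hdisj,
    card_powersetCard, card_powersetCard]
  simp only [Nat.card_Icc]
  decide

lemma blow_mem_goodFam {K : Finset ℕ}
    (h : K ∈ ((Finset.Icc 1 15).powersetCard 3) ∪ ((Finset.Icc (16:ℕ) 30).powersetCard 3)) :
    blow K ∈ goodFam := mem_image_of_mem blow h

lemma goodFam_blocks : ∀ B ∈ goodFam, B ⊆ Finset.Icc 1 60 ∧ B.card = 6 := by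
  intro B hB
  obtain ⟨K, hK, rfl⟩ := mem_image.1 hB
  simp only [mem_union, mem_powersetCard] at hK
  have hbound : ∀ k ∈ K, 1 ≤ k ∧ k ≤ 30 := by
    rcases hK with ⟨h1, _⟩ | ⟨h1, _⟩ <;> intro k hk <;>
      have := h1 hk <;> simp only [Finset.mem_Icc] at this <;> omega
  constructor
  · intro x hx
    obtain ⟨k, hk, h⟩ := mem_blow.1 hx
    have := hbound k hk
    simp only [Finset.mem_Icc]
    omega
  · rw [card_blow K (fun k hk => (hbound k hk).1)]
    rcases hK with ⟨_, h2⟩ | ⟨_, h2⟩ <;> omega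

/-- Covering within one half: if `T ⊆ S` has 3 elements with pair-indices in
`Icc a (a+14)`, some block covers. -/
lemma cover_half (a : ℕ) (ha : 1 ≤ a) (S T : Finset ℕ) (hTS : T ⊆ S) (hTc : T.card = 3)
    (hT : ∀ x ∈ T, 2 * a - 1 ≤ x ∧ x ≤ 2 * a + 28) :
    ∃ K ∈ (Finset.Icc a (a + 14)).powersetCard 3, 3 ≤ (S ∩ blow K).card := by
  set J := T.image (fun x => (x + 1) / 2) with hJ
  have hJsub : J ⊆ Finset.Icc a (a + 14) := by
    intro j hj
    obtain ⟨x, hx, rfl⟩ := mem_image.1 hj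
    have := hT x hx
    simp only [Finset.mem_Icc]
    omega
  have hJcard : J.card ≤ 3 := hTc ▸ card_image_le
  have hIcc : (Finset.Icc a (a + 14)).card = 15 := by rw [Nat.card_Icc]; omega
  obtain ⟨K, hJK, hKsub, hKcard⟩ :=
    Finset.exists_subsuperset_card_eq (n := 3) hJsub (by omega) (by rw [hIcc]; omega)
  refine ⟨K, mem_powersetCard.2 ⟨hKsub, hKcard⟩, ?_⟩
  have hTB : T ⊆ S ∩ blow K := by
    intro x hx
    rw [mem_inter]
    refine ⟨hTS hx, ?_⟩
    have hxb := hT x hx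
    refine mem_blow.2 ⟨(x + 1) / 2, hJK (mem_image_of_mem _ hx), by omega⟩
  calc 3 = T.card := hTc.symm
    _ ≤ (S ∩ blow K).card := card_le_card hTB

lemma goodFam_covers : ∀ S : Finset ℕ, S ⊆ Finset.Icc 1 60 → S.card = 6 →
    ∃ B ∈ goodFam, 3 ≤ (S ∩ B).card := by
  intro S hS hSc
  have hsplit : (S ∩ Finset.Icc 1 30).card + (S \ Finset.Icc 1 30).card = 6 := by
    rw [Finset.card_inter_add_card_sdiff]; exact hSc
  rcases le_or_gt 3 (S ∩ Finset.Icc 1 30).card with h | h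
  · obtain ⟨T, hTsub, hTc⟩ := Finset.exists_subset_card_eq h
    have hTS : T ⊆ S := hTsub.trans inter_subset_left
    obtain ⟨K, hK, hcov⟩ := cover_half 1 le_rfl S T hTS hTc (by
      intro x hx
      have := hTsub hx
      rw [mem_inter, Finset.mem_Icc] at this
      omega)
    exact ⟨blow K, blow_mem_goodFam (mem_union_left _ hK), hcov⟩
  · have h3 : 3 ≤ (S \ Finset.Icc 1 30).card := by omega
    obtain ⟨T, hTsub, hTc⟩ := Finset.exists_subset_card_eq h3
    have hTS : T ⊆ S := hTsub.trans sdiff_subset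
    obtain ⟨K, hK, hcov⟩ := cover_half 16 (by norm_num) S T hTS hTc (by
      intro x hx
      have h1 := hTsub hx
      rw [mem_sdiff, Finset.mem_Icc] at h1
      have h2 := hS h1.1
      rw [Finset.mem_Icc] at h2
      omega)
    have : Finset.Icc (16:ℕ) (16 + 14) = Finset.Icc 16 30 := by norm_num
    rw [this] at hK
    exact ⟨blow K, blow_mem_goodFam (mem_union_right _ hK), hcov⟩

lemma goodFam_works : TripleIntersecting goodFam := ⟨goodFam_blocks, goodFam_covers⟩

/-- Letting `M` be the minimum size of a triple-intersecting family, one has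
`97 ≤ M ≤ 910`; in particular, a triple-intersecting family with exactly 910
blocks exists, and every triple-intersecting family has at least 97 blocks. -/
theorem stmt_9 :
    (97 ≤ sInf {n : ℕ | ∃ 𝓕 : Finset (Finset ℕ), TripleIntersecting 𝓕 ∧ 𝓕.card = n} ∧
     sInf {n : ℕ | ∃ 𝓕 : Finset (Finset ℕ), TripleIntersecting 𝓕 ∧ 𝓕.card = n} ≤ 910) ∧
    (∃ 𝓕 : Finset (Finset ℕ), TripleIntersecting 𝓕 ∧ 𝓕.card = 910) ∧
    (∀ 𝓕 : Finset (Finset ℕ), TripleIntersecting 𝓕 → 97 ≤ 𝓕.card) := by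
  have hmem : 910 ∈ {n : ℕ | ∃ 𝓕 : Finset (Finset ℕ), TripleIntersecting 𝓕 ∧ 𝓕.card = n} :=
    ⟨goodFam, goodFam_works, goodFam_card⟩
  have hub : sInf {n : ℕ | ∃ 𝓕 : Finset (Finset ℕ), TripleIntersecting 𝓕 ∧ 𝓕.card = n} ≤ 910 :=
    Nat.sInf_le hmem
  have hlb : 97 ≤ sInf {n : ℕ | ∃ 𝓕 : Finset (Finset ℕ), TripleIntersecting 𝓕 ∧ 𝓕.card = n} := by
    obtain ⟨𝓕, h𝓕, hcard⟩ :=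
      Nat.sInf_mem (⟨910, hmem⟩ : {n : ℕ | ∃ 𝓕 : Finset (Finset ℕ),
        TripleIntersecting 𝓕 ∧ 𝓕.card = n}.Nonempty)
    rw [← hcard]
    exact lower_bound 𝓕 h𝓕
  exact ⟨⟨hlb, hub⟩, ⟨goodFam, goodFam_works, goodFam_card⟩, lower_bound⟩
end
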